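/- Let c = (A_1|⋯|A_r, B_1|⋯|B_r) be a bipartition on (a, b) with r > 1. For 1 ≤ k ≤ r let (a_{k,1},…,a_{k,p_k}) := EP_{A_1 ∪ ⋯ ∪ A_k}(A_k) and (b_{k,1},…,b_{k,q_k}) := EP_{B_k ∪ ⋯ ∪ B_r}(B_k), and let C_k be the q_k × p_k elementary matrix with (i,j) entry b_{k,i}/a_{k,j}. Then c = C_1 C_2 ⋯ C_r is a factorization of c (each consecutive pair is a Block Transverse Pair and the iterated product equals c), and it is the unique factorization of c into elementary bipartition matrices. -/

import Mathlib

/-!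
The partial product `C₁ ⋯ C_k` of the elementary factors is the column factor of the
transverse decomposition of `c` at `k`: its entries are the first `k` biblocks of `c` with
numerators cut down to the blocks of `EP_b(B₁ ∪ ⋯ ∪ B_k)`. Since embedding partitions refine
(each block of `EP_b(B₁ ∪ ⋯ ∪ B_{k+1})` splits into blocks of `EP_b(B₁ ∪ ⋯ ∪ B_k)`),
multiplying by `C_{k+1}` is a block transverse product whose `i`-th block is the transverse
decomposition at `k` of the `i`-th entry of the next partial product; at `k = r` the column is
`[c]`. Consecutive elementary factors form a BTP for the same reason, blocks being cut out by
`EP(A_k ∪ A_{k+1})` and `EP(B_k ∪ B_{k+1})`.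

For uniqueness, in any factorization into elementary matrices every partial product is a
column whose entries at step `k` have length `k`, so there are `r` factors. A transverse pair is
determined by its product and its cut, so descending from the last partial product `[c]`
determines every partial product and every factor.
-/

namespace BipM

/-- A bipartition `β/α` of length `r` is encoded as a list of `r` biblocks
`(Aₜ, Bₜ)` (denominator block, numerator block). -/
abbrev Bip : Type := List (Finset ℕ × Finset ℕ)

/-- The union of the blocks of a list of finite sets. -/
def listUnion (L : List (Finset ℕ)) : Finset ℕ := L.foldr (· ∪ ·) ∅

/-- `L` is an augmented partition of `s`. -/
def IsAugPart (s : Finset ℕ) (L : List (Finset ℕ)) : Prop :=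
  L.Pairwise Disjoint ∧ listUnion L = s

/-- `c` is a bipartition on `(a, b)` (of length `c.length ≥ 1`). -/
def IsBipartition (a b : Finset ℕ) (c : Bip) : Prop :=
  c ≠ [] ∧ IsAugPart a (c.map Prod.fst) ∧ IsAugPart b (c.map Prod.snd)

/-- The input set of a bipartition (union of its denominator blocks). -/
def bipIS (c : Bip) : Finset ℕ := listUnion (c.map Prod.fst)

/-- The output set of a bipartition (union of its numerator blocks). -/
def bipOS (c : Bip) : Finset ℕ := listUnion (c.map Prod.snd)

/-- The `(i,j)` entry of a matrix of bipartitions (list of rows, 0-indexed). -/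
def entry (M : List (List Bip)) (i j : ℕ) : Bip := (M.getD i []).getD j []

/-- The number of columns of a matrix given as a list of rows. -/
def wid (M : List (List Bip)) : ℕ := (M.headD []).length

/-- `M` is a (`M.length × wid M`) bipartition matrix over `(a₁,…,a_p ; b₁,…,b_q)`,
where `a_j = bipIS (entry M 0 j)` and `b_i = bipOS (entry M i 0)`:  it is a nonempty
rectangular matrix of bipartitions, the numerators of the `(i,j)` entry form an
augmented partition of `b_i`, the denominators form an augmented partition of `a_j`,
and the `a_j` (resp. `b_i`) are pairwise disjoint (being the blocks of augmented
partitions of the ambient input/output sets). -/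
structure IsBipMat (M : List (List Bip)) : Prop where
  nrows : M ≠ []
  ncols : M.headD [] ≠ []
  rect : ∀ row ∈ M, row.length = wid M
  entries_ne : ∀ row ∈ M, ∀ e ∈ row, e ≠ []
  rows : ∀ i j, i < M.length → j < wid M →
    IsAugPart (bipOS (entry M i 0)) ((entry M i j).map Prod.snd)
  cols : ∀ i j, i < M.length → j < wid M →
    IsAugPart (bipIS (entry M 0 j)) ((entry M i j).map Prod.fst)
  in_disj : ∀ j j', j < wid M → j' < wid M → j ≠ j' →
    Disjoint (bipIS (entry M 0 j)) (bipIS (entry M 0 j'))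
  out_disj : ∀ i i', i < M.length → i' < M.length → i ≠ i' →
    Disjoint (bipOS (entry M i 0)) (bipOS (entry M i' 0))

/-- The input set `is(M)` of a bipartition matrix. -/
def matIS (M : List (List Bip)) : Finset ℕ := listUnion ((M.headD []).map bipIS)

/-- The output set `os(M)` of a bipartition matrix. -/
def matOS (M : List (List Bip)) : Finset ℕ := listUnion (M.map (fun row => bipOS (row.headD [])))

/-- The `λ`-projection `μ_λ`: for `λ = {λ¹ < ⋯ < λ^k} ⊆ {1,…,r−1}` and `L` of length
`r`, merge the blocks of `L` at the cut positions of `λ`, producing `k + 1` blocks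
`Ā_i = A_{λ^{i−1}+1} ∪ ⋯ ∪ A_{λ^i}` (with `λ⁰ = 0`, `λ^{k+1} = r`). -/
def muProj (lam : Finset ℕ) (L : List (Finset ℕ)) : List (Finset ℕ) :=
  (List.range (lam.card + 1)).map fun i =>
    (Finset.Ico (((0 :: lam.sort (· ≤ ·)) ++ [L.length]).getD i 0)
        (((0 :: lam.sort (· ≤ ·)) ++ [L.length]).getD (i + 1) 0)).biUnion
      fun j => L.getD j ∅

/-- The `(i,j)` entry of a matrix of finite sets. -/
def lamEntry (lam : List (List (Finset ℕ))) (i j : ℕ) : Finset ℕ := (lam.getD i []).getD j ∅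

/-- Shape condition for (row/column) equalizers: `lam` has the same matrix dimensions
as `M` and `lam_{ij} ⊆ {1,…,r_{ij}−1}` where `r_{ij}` is the length of the `(i,j)`
entry of `M`. -/
def EqShape (M : List (List Bip)) (lam : List (List (Finset ℕ))) : Prop :=
  lam.length = M.length ∧ (∀ row ∈ lam, row.length = wid M) ∧
  ∀ i j, i < M.length → j < wid M →
    ∀ x ∈ lamEntry lam i j, 1 ≤ x ∧ x + 1 ≤ (entry M i j).length

/-- Row condition: in each row, the `λ`-projections of the numerators agree. -/
def RowCond (M : List (List Bip)) (lam : List (List (Finset ℕ))) : Prop :=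
  ∀ i j j', i < M.length → j < wid M → j' < wid M →
    muProj (lamEntry lam i j) ((entry M i j).map Prod.snd)
      = muProj (lamEntry lam i j') ((entry M i j').map Prod.snd)

/-- Column condition: in each column, the `λ`-projections of the denominators agree. -/
def ColCond (M : List (List Bip)) (lam : List (List (Finset ℕ))) : Prop :=
  ∀ i i' j, i < M.length → i' < M.length → j < wid M →
    muProj (lamEntry lam i j) ((entry M i j).map Prod.fst)
      = muProj (lamEntry lam i' j) ((entry M i' j).map Prod.fst)

/-- A row equalizer of `M`: cardinalities `s_i` constant along each row. -/
def IsRowEqualizer (M : List (List Bip)) (lam : List (List (Finset ℕ))) : Prop :=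
  EqShape M lam ∧
  (∀ i j j', i < M.length → j < wid M → j' < wid M →
      (lamEntry lam i j).card = (lamEntry lam i j').card) ∧
  RowCond M lam

/-- A column equalizer of `M`: cardinalities `t_j` constant along each column. -/
def IsColEqualizer (M : List (List Bip)) (lam : List (List (Finset ℕ))) : Prop :=
  EqShape M lam ∧
  (∀ i i' j, i < M.length → i' < M.length → j < wid M →
      (lamEntry lam i j).card = (lamEntry lam i' j).card) ∧
  ColCond M lam

/-- An equalizer of `M` with constant cardinality `r`. -/
def IsEqualizer (M : List (List Bip)) (lam : List (List (Finset ℕ))) (r : ℕ) : Prop :=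
  EqShape M lam ∧
  (∀ i j, i < M.length → j < wid M → (lamEntry lam i j).card = r) ∧
  RowCond M lam ∧ ColCond M lam

/-- A maximal row equalizer: each `s_i` is maximal among row equalizers. -/
def IsMaxRowEqualizer (M : List (List Bip)) (lam : List (List (Finset ℕ))) : Prop :=
  IsRowEqualizer M lam ∧
  ∀ mu, IsRowEqualizer M mu → ∀ i, i < M.length →
    (lamEntry mu i 0).card ≤ (lamEntry lam i 0).card

/-- A maximal column equalizer: each `t_j` is maximal among column equalizers. -/
def IsMaxColEqualizer (M : List (List Bip)) (lam : List (List (Finset ℕ))) : Prop :=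
  IsColEqualizer M lam ∧
  ∀ mu, IsColEqualizer M mu → ∀ j, j < wid M →
    (lamEntry mu 0 j).card ≤ (lamEntry lam 0 j).card

/-- A maximal equalizer: `r` is maximal among equalizers. -/
def IsMaxEqualizer (M : List (List Bip)) (lam : List (List (Finset ℕ))) (r : ℕ) : Prop :=
  IsEqualizer M lam r ∧ ∀ mu r', IsEqualizer M mu r' → r' ≤ r

/-- Lexicographic comparison of finite sets of naturals, viewed as increasing lists. -/
def finsetLex (S T : Finset ℕ) : Prop :=
  List.Lex (· < ·) (S.sort (· ≤ ·)) (T.sort (· ≤ ·))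

/-- Lexicographic comparison of matrices of finite sets, entries listed in row order. -/
def matLexLt (lam mu : List (List (Finset ℕ))) : Prop :=
  List.Lex finsetLex lam.flatten mu.flatten

/-- The canonical maximal equalizer `Λ(M)`: the lexicographically least maximal
equalizer. -/
def IsCanonMaxEqualizer (M : List (List Bip)) (lam : List (List (Finset ℕ))) (r : ℕ) : Prop :=
  IsMaxEqualizer M lam r ∧
  ∀ mu r', IsMaxEqualizer M mu r' → mu = lam ∨ matLexLt lam mu

/-- The canonical maximal row equalizer `Λ^{row}(M)`. -/
def IsCanonMaxRowEqualizer (M : List (List Bip)) (lam : List (List (Finset ℕ))) : Prop :=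
  IsMaxRowEqualizer M lam ∧
  ∀ mu, IsMaxRowEqualizer M mu → mu = lam ∨ matLexLt lam mu

/-- The canonical maximal column equalizer `Λ^{col}(M)`. -/
def IsCanonMaxColEqualizer (M : List (List Bip)) (lam : List (List (Finset ℕ))) : Prop :=
  IsMaxColEqualizer M lam ∧
  ∀ mu, IsMaxColEqualizer M mu → mu = lam ∨ matLexLt lam mu

/-- `kth S u` is the `u`-th smallest element of `S` (0-indexed), i.e. `S^{u+1}`. -/
def kth (S : Finset ℕ) (u : ℕ) : ℕ := (S.sort (· ≤ ·)).getD u 0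

/-- Split `a` along an increasing list of cut points. -/
def epBlocks (a : Finset ℕ) : List ℕ → List (Finset ℕ)
  | [] => [a]
  | d :: ds => (a.filter (fun x => x < d)) :: epBlocks (a.filter (fun x => d < x)) ds

/-- The embedding partition `EP_b(a)` of `a ⊆ b`. -/
def EP (b a : Finset ℕ) : List (Finset ℕ) :=
  epBlocks a ((b \ a).sort (· ≤ ·))

/-- The `q×1` factor of the transverse decomposition of the bipartition `c` on
`(a,b)` at `1 ≤ lam < c.length`, recorded as its list of `q` entries: with
`(b₁,…,b_q) = EP_b(B₁ ∪ ⋯ ∪ B_lam)`, the `i`-th entry is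
`(A₁|⋯|A_lam , B₁∩b_i|⋯|B_lam∩b_i)`. -/
def transColumn (b : Finset ℕ) (c : Bip) (lam : ℕ) : List Bip :=
  (EP b (listUnion ((c.take lam).map Prod.snd))).map fun bi =>
    (c.take lam).map fun x => (x.1, x.2 ∩ bi)

/-- The `1×p` factor of the transverse decomposition of `c` at `lam`: with
`(a₁,…,a_p) = EP_a(A_{lam+1} ∪ ⋯ ∪ A_r)`, the `j`-th entry is
`(A_{lam+1}∩a_j|⋯|A_r∩a_j , B_{lam+1}|⋯|B_r)`. -/
def transRow (a : Finset ℕ) (c : Bip) (lam : ℕ) : List Bip :=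
  (EP a (listUnion ((c.drop lam).map Prod.fst))).map fun aj =>
    (c.drop lam).map fun x => (x.1 ∩ aj, x.2)

/-- `(Acol, Brow)` is a Transverse Pair: it is the transverse decomposition of some
bipartition at some `lam`.  (`Acol` is the entry list of a `q×1` matrix, `Brow` the
entry list of a `1×p` matrix.) -/
def IsTP (Acol Brow : List Bip) : Prop :=
  ∃ (a b : Finset ℕ) (c : Bip) (lam : ℕ),
    IsBipartition a b c ∧ 1 ≤ lam ∧ lam < c.length ∧
    Acol = transColumn b c lam ∧ Brow = transRow a c lam

/-- The value `AB` of the formal product of a transverse pair: the bipartition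
recovered by merging numerators down the column factor and denominators along the
row factor. -/
def tpProd (Acol Brow : List Bip) : Bip :=
  ((List.range (Acol.headD []).length).map fun t =>
    (((Acol.headD []).getD t (∅, ∅)).1, listUnion (Acol.map fun e => (e.getD t (∅, ∅)).2)))
  ++ ((List.range (Brow.headD []).length).map fun t =>
    (listUnion (Brow.map fun e => (e.getD t (∅, ∅)).1), ((Brow.headD []).getD t (∅, ∅)).2))

/-- The `q_{i}×1` block of `A` in rows `[off, off+h)` and column `j`, as its entry
list. -/
def colBlock (A : List (List Bip)) (off h j : ℕ) : List Bip :=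
  ((A.drop off).take h).map fun row => row.getD j []

/-- The `1×p_j` block of row `i` of `B` in columns `[off, off+w)`, as its entry
list. -/
def rowBlock (B : List (List Bip)) (i off w : ℕ) : List Bip :=
  ((B.getD i []).drop off).take w

/-- `C` is the value of the product of the Block Transverse Pair `(A, B)`:
there are block decompositions of `A` into `t×s` column blocks `A_{ij}` (row-group
sizes `qs`) and of `B` into `t×s` row blocks `B_{ij}` (column-group sizes `ps`)
such that each `(A_{ij}, B_{ij})` is a TP and `C = (A_{ij}B_{ij})`. -/
def IsBTPProd (A B C : List (List Bip)) : Prop :=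
  ∃ qs ps : List ℕ,
    qs.length = B.length ∧ ps.length = wid A ∧
    qs.sum = A.length ∧ ps.sum = wid B ∧
    (∀ x ∈ qs, 1 ≤ x) ∧ (∀ x ∈ ps, 1 ≤ x) ∧
    C.length = B.length ∧ (∀ row ∈ C, row.length = wid A) ∧
    ∀ i j, i < B.length → j < wid A →
      IsTP (colBlock A ((qs.take i).sum) (qs.getD i 0) j)
           (rowBlock B i ((ps.take j).sum) (ps.getD j 0)) ∧
      entry C i j = tpProd (colBlock A ((qs.take i).sum) (qs.getD i 0) j)
                           (rowBlock B i ((ps.take j).sum) (ps.getD j 0))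

/-- `(A, B)` is a Block Transverse Pair. -/
def IsBTP (A B : List (List Bip)) : Prop := ∃ C, IsBTPProd A B C

/-- `Cs = [C₁,…,C_r]` (`r ≥ 2`) is a factorization of the bipartition matrix `M`:
each `C_k` is a bipartition matrix, each consecutive pair is a BTP, and the iterated
product `(⋯(C₁C₂)⋯)C_r` (witnessed by the chain `D` of partial products) equals `M`. -/
def IsMatFactorization (Cs : List (List (List Bip))) (M : List (List Bip)) : Prop :=
  2 ≤ Cs.length ∧
  (∀ F ∈ Cs, IsBipMat F) ∧
  (∀ k, k + 1 < Cs.length → IsBTP (Cs.getD k []) (Cs.getD (k + 1) [])) ∧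
  ∃ D : List (List (List Bip)),
    D.length = Cs.length ∧
    D.getD 0 [] = Cs.getD 0 [] ∧
    (∀ k, k + 1 < Cs.length → IsBTPProd (D.getD k []) (Cs.getD (k + 1) []) (D.getD (k + 1) [])) ∧
    D.getD (Cs.length - 1) [] = M

/-- A bipartition matrix is indecomposable if its only equalizer is null. -/
def Indecomposable (M : List (List Bip)) : Prop :=
  ∀ lam r, IsEqualizer M lam r → r = 0

end BipM

namespace BipM

/-- The `k`-th (0-indexed) elementary factor of the bipartition
`c = (A₁|⋯|A_r , B₁|⋯|B_r)`:  with `(a_{k,1},…,a_{k,p_k}) = EP_{A₁∪⋯∪A_{k+1}}(A_{k+1})`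
and `(b_{k,1},…,b_{k,q_k}) = EP_{B_{k+1}∪⋯∪B_r}(B_{k+1})` (1-indexed in the paper),
the `q_k × p_k` elementary matrix with `(i,j)` entry the length-one bipartition
`b_{k,i} / a_{k,j}`. -/
def elemFactor (c : Bip) (k : ℕ) : List (List Bip) :=
  (EP (listUnion ((c.drop k).map Prod.snd)) ((c.getD k (∅, ∅)).2)).map fun bi =>
    (EP (listUnion ((c.take (k + 1)).map Prod.fst)) ((c.getD k (∅, ∅)).1)).map fun aj =>
      [(aj, bi)]

/-- `M` is an elementary bipartition matrix: its `(i,j)` entry is the elementary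
(length-one) bipartition `b_i/a_j`. -/
def IsElemMat (M : List (List Bip)) : Prop :=
  ∃ as bs : List (Finset ℕ), M = bs.map fun bo => as.map fun ao => [(ao, bo)]

section Lists

variable {α β : Type*}

lemma getD_map_of_lt (l : List α) (f : α → β) (d : β) (d' : α) {n : ℕ} (h : n < l.length) :
    (l.map f).getD n d = f (l.getD n d') := by
  rw [List.getD_eq_getElem _ _ (by simpa using h), List.getD_eq_getElem _ _ h, List.getElem_map]

lemma getD_mem_of_lt {l : List α} (d : α) {n : ℕ} (h : n < l.length) : l.getD n d ∈ l := by
  rw [List.getD_eq_getElem _ _ h]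
  exact List.getElem_mem _

lemma getD_take_of_lt (l : List α) (d : α) {t n : ℕ} (ht : t < n) :
    (l.take n).getD t d = l.getD t d := by
  simp only [List.getD_eq_getElem?_getD, List.getElem?_take_of_lt ht]

lemma getD_range_map (f : ℕ → α) (d : α) {n i : ℕ} (hi : i < n) :
    ((List.range n).map f).getD i d = f i := by
  rw [getD_map_of_lt _ _ _ 0 (by simpa using hi), List.getD_eq_getElem _ _ (by simpa using hi),
    List.getElem_range]

lemma map_range_getD (l : List α) (d : α) {n : ℕ} (h : n ≤ l.length) :
    (List.range n).map (fun t => l.getD t d) = l.take n := by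
  apply List.ext_getElem (by simp [h])
  intro i h1 h2
  simp only [List.getElem_map, List.getElem_range, List.getElem_take]
  rw [List.getD_eq_getElem]

lemma sum_take_add_getD_le (qs : List ℕ) {i : ℕ} (hi : i < qs.length) :
    (qs.take i).sum + qs.getD i 0 ≤ qs.sum := by
  rw [List.getD_eq_getElem _ _ hi, ← List.sum_take_succ _ _ hi]
  conv_rhs => rw [← List.take_append_drop (i + 1) qs, List.sum_append]
  exact Nat.le_add_right _ _

lemma flatten_drop_take_sum (cs : List (List α)) : ∀ {i}, i < cs.length →
    (cs.flatten.drop ((cs.map List.length).take i).sum).take ((cs.map List.length).getD i 0)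
      = cs.getD i [] := by
  induction cs with
  | nil => intro i hi; simp at hi
  | cons c cs ih =>
    intro i hi
    cases i with
    | zero => simp
    | succ i =>
      simpa [Nat.add_comm, List.drop_length_add_append] using ih (i := i) (by simpa using hi)

lemma flatMap_drop_take_sum (L : List β) (g : β → List α) (d : β) {i : ℕ}
    (hi : i < L.length) :
    ((L.flatMap g).drop ((L.map fun x => (g x).length).take i).sum).take
        ((L.map fun x => (g x).length).getD i 0) = g (L.getD i d) := by
  have hlen : (L.map g).map List.length = L.map fun x => (g x).length := by simp [Function.comp_def]
  rw [List.flatMap_def, ← hlen, flatten_drop_take_sum _ (by simpa using hi),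
    getD_map_of_lt _ _ _ d hi]

end Lists

section ListUnion

@[simp] lemma listUnion_nil : listUnion [] = ∅ := rfl

@[simp] lemma listUnion_cons (s : Finset ℕ) (L : List (Finset ℕ)) :
    listUnion (s :: L) = s ∪ listUnion L := rfl

@[simp] lemma mem_listUnion {L : List (Finset ℕ)} {x : ℕ} :
    x ∈ listUnion L ↔ ∃ s ∈ L, x ∈ s := by
  induction L with
  | nil => simp
  | cons t L ih => simp [ih]

lemma listUnion_singleton (s : Finset ℕ) : listUnion [s] = s := by simp

lemma subset_listUnion {L : List (Finset ℕ)} {s : Finset ℕ} (h : s ∈ L) : s ⊆ listUnion L :=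
  fun _ hx => mem_listUnion.2 ⟨s, h, hx⟩

lemma listUnion_subset {L : List (Finset ℕ)} {t : Finset ℕ} (h : ∀ s ∈ L, s ⊆ t) :
    listUnion L ⊆ t := fun _ hx => by
  obtain ⟨s, hs, hx⟩ := mem_listUnion.1 hx
  exact h s hs hx

lemma listUnion_map_inter (L : List (Finset ℕ)) (s : Finset ℕ) :
    listUnion (L.map (· ∩ s)) = listUnion L ∩ s := by
  ext x; simp only [mem_listUnion, List.mem_map, Finset.mem_inter]; grind

lemma listUnion_map_inter_left (L : List (Finset ℕ)) (s : Finset ℕ) :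
    listUnion (L.map (s ∩ ·)) = s ∩ listUnion L := by
  ext x; simp only [mem_listUnion, List.mem_map, Finset.mem_inter]; grind

lemma listUnion_append (L M : List (Finset ℕ)) :
    listUnion (L ++ M) = listUnion L ∪ listUnion M := by
  ext x; simp only [mem_listUnion, List.mem_append, Finset.mem_union]; grind

lemma listUnion_take_subset (L : List (Finset ℕ)) (n : ℕ) :
    listUnion (L.take n) ⊆ listUnion L :=
  listUnion_subset fun _ hs => subset_listUnion (List.mem_of_mem_take hs)

lemma listUnion_take_append_drop (L : List (Finset ℕ)) (n : ℕ) :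
    listUnion (L.take n) ∪ listUnion (L.drop n) = listUnion L := by
  rw [← listUnion_append, List.take_append_drop]

lemma disjoint_listUnion_take_drop {L : List (Finset ℕ)} (h : L.Pairwise Disjoint) (n : ℕ) :
    Disjoint (listUnion (L.take n)) (listUnion (L.drop n)) := by
  rw [← List.take_append_drop n L, List.pairwise_append] at h
  rw [Finset.disjoint_left]
  intro x hx hx'
  obtain ⟨s, hs, hxs⟩ := mem_listUnion.1 hx
  obtain ⟨t, ht, hxt⟩ := mem_listUnion.1 hx'
  exact Finset.disjoint_left.1 (h.2.2 s hs t ht) hxs hxt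

lemma listUnion_sdiff_take {L : List (Finset ℕ)} (h : L.Pairwise Disjoint) (n : ℕ) :
    listUnion L \ listUnion (L.take n) = listUnion (L.drop n) := by
  rw [← listUnion_take_append_drop]
  exact Finset.union_sdiff_cancel_left (disjoint_listUnion_take_drop h n)

lemma listUnion_take_succ (L : List (Finset ℕ)) (n : ℕ) :
    listUnion (L.take (n + 1)) = listUnion (L.take n) ∪ L.getD n ∅ := by
  rw [List.take_add_one, listUnion_append, List.getD_eq_getElem?_getD]
  cases L[n]? <;> simp

lemma listUnion_drop_eq_union (L : List (Finset ℕ)) (n : ℕ) :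
    listUnion (L.drop n) = L.getD n ∅ ∪ listUnion (L.drop (n + 1)) := by
  rcases lt_or_ge n L.length with h | h
  · rw [List.drop_eq_getElem_cons h, listUnion_cons, List.getD_eq_getElem _ _ h]
  · rw [List.drop_eq_nil_of_le h, List.drop_eq_nil_of_le (Nat.le_succ_of_le h),
      List.getD_eq_default _ _ h]
    rfl

lemma disjoint_getD_of_pairwise {L : List (Finset ℕ)} (h : L.Pairwise Disjoint) {i j : ℕ}
    (hij : i ≠ j) : Disjoint (L.getD i ∅) (L.getD j ∅) := by
  rcases lt_or_ge i L.length with hi | hi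
  · rcases lt_or_ge j L.length with hj | hj
    · rw [List.getD_eq_getElem _ _ hi, List.getD_eq_getElem _ _ hj]
      rcases lt_or_gt_of_ne hij with hlt | hlt
      · exact List.pairwise_iff_getElem.1 h i j hi hj hlt
      · exact (List.pairwise_iff_getElem.1 h j i hj hi hlt).symm
    · rw [List.getD_eq_default _ _ hj]
      exact Finset.disjoint_empty_right _
  · rw [List.getD_eq_default _ _ hi]
    exact Finset.disjoint_empty_left _

lemma getD_subset_listUnion_take (L : List (Finset ℕ)) {t n : ℕ} (ht : t < n) :
    L.getD t ∅ ⊆ listUnion (L.take n) := by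
  rcases lt_or_ge t L.length with htL | htL
  · rw [← getD_take_of_lt _ _ ht]
    exact subset_listUnion (getD_mem_of_lt _ (by simp [htL, ht]))
  · rw [List.getD_eq_default _ _ htL]
    exact Finset.empty_subset _

lemma disjoint_getD_listUnion_drop {L : List (Finset ℕ)} (h : L.Pairwise Disjoint) (k : ℕ) :
    Disjoint (L.getD k ∅) (listUnion (L.drop (k + 1))) := by
  rw [Finset.disjoint_right]
  intro x hx hx'
  obtain ⟨s, hs, hxs⟩ := mem_listUnion.1 hx
  obtain ⟨j, hj, rfl⟩ := List.getElem_of_mem hs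
  rw [List.getElem_drop, ← List.getD_eq_getElem _ ∅] at hxs
  exact Finset.disjoint_left.1 (disjoint_getD_of_pairwise h (by omega)) hx' hxs

lemma disjoint_listUnion_take_getD {L : List (Finset ℕ)} (h : L.Pairwise Disjoint) {k t : ℕ}
    (hkt : k ≤ t) : Disjoint (listUnion (L.take k)) (L.getD t ∅) := by
  rw [Finset.disjoint_left]
  intro x hx hx'
  obtain ⟨s, hs, hxs⟩ := mem_listUnion.1 hx
  obtain ⟨j, hj, rfl⟩ := List.getElem_of_mem hs
  rw [List.getElem_take, ← List.getD_eq_getElem _ ∅] at hxs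
  exact Finset.disjoint_left.1 (disjoint_getD_of_pairwise h (by simp at hj; omega)) hxs hx'

end ListUnion

section EmbeddingPartition

lemma length_epBlocks (a : Finset ℕ) (ds : List ℕ) :
    (epBlocks a ds).length = ds.length + 1 := by
  induction ds generalizing a with
  | nil => rfl
  | cons d ds ih => simp [epBlocks, ih]

lemma subset_of_mem_epBlocks {a blk : Finset ℕ} {ds : List ℕ} (h : blk ∈ epBlocks a ds) :
    blk ⊆ a := by
  induction ds generalizing a with
  | nil => simp_all [epBlocks]
  | cons d ds ih =>
    rcases List.mem_cons.1 h with rfl | h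
    · exact Finset.filter_subset _ _
    · exact (ih h).trans (Finset.filter_subset _ _)

lemma listUnion_epBlocks {a : Finset ℕ} {ds : List ℕ} (h : ∀ x ∈ a, x ∉ ds) :
    listUnion (epBlocks a ds) = a := by
  induction ds generalizing a with
  | nil => simp [epBlocks]
  | cons d ds ih =>
    rw [epBlocks, listUnion_cons, ih fun x hx => by grind]
    ext x
    simp only [Finset.mem_union, Finset.mem_filter]
    have := h x
    grind

lemma pairwise_disjoint_epBlocks (a : Finset ℕ) (ds : List ℕ) :
    (epBlocks a ds).Pairwise Disjoint := by
  induction ds generalizing a with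
  | nil => simp [epBlocks]
  | cons d ds ih =>
    refine List.Pairwise.cons (fun blk hblk => ?_) (ih _)
    rw [Finset.disjoint_left]
    intro x hx hx'
    have := (Finset.mem_filter.1 hx).2
    have := (Finset.mem_filter.1 (subset_of_mem_epBlocks hblk hx')).2
    omega

lemma epBlocks_map_inter (a s : Finset ℕ) (ds : List ℕ) :
    (epBlocks a ds).map (· ∩ s) = epBlocks (a ∩ s) ds := by
  induction ds generalizing a with
  | nil => simp [epBlocks]
  | cons d ds ih =>
    rw [epBlocks, epBlocks, List.map_cons, ih, Finset.filter_inter, Finset.filter_inter]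

lemma epBlocks_append_cons (a : Finset ℕ) {xs : List ℕ} {y : ℕ} (ys : List ℕ)
    (hxy : ∀ x ∈ xs, x < y) :
    epBlocks a (xs ++ y :: ys)
      = epBlocks (a.filter (· < y)) xs ++ epBlocks (a.filter (y < ·)) ys := by
  induction xs generalizing a with
  | nil => simp [epBlocks]
  | cons x xs ih =>
    have hx : x < y := hxy x (by simp)
    have h1 : (a.filter (· < y)).filter (· < x) = a.filter (· < x) := by
      ext z; simp only [Finset.mem_filter]; grind
    have h2 : (a.filter (x < ·)).filter (· < y) = (a.filter (· < y)).filter (x < ·) := by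
      ext z; simp only [Finset.mem_filter]; grind
    have h3 : (a.filter (x < ·)).filter (y < ·) = a.filter (y < ·) := by
      ext z; simp only [Finset.mem_filter]; grind
    rw [List.cons_append, epBlocks, epBlocks, ih _ fun z hz => hxy z (by simp [hz]),
      List.cons_append, h1, h2, h3]

lemma sort_eq_append_cons {X : Finset ℕ} {e : ℕ} (he : e ∈ X) :
    X.sort (· ≤ ·)
      = (X.filter (· < e)).sort (· ≤ ·) ++ e :: (X.filter (e < ·)).sort (· ≤ ·) := by
  refine (Finset.sortedLT_sort X).pairwise.eq_of_mem_iff ?_ fun z => ?_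
  · simp only [List.pairwise_append, List.pairwise_cons, Finset.mem_sort, Finset.mem_filter,
      List.mem_cons]
    refine ⟨(Finset.sortedLT_sort _).pairwise, ⟨fun z hz => hz.2,
      (Finset.sortedLT_sort _).pairwise⟩, ?_⟩
    rintro x ⟨-, hx⟩ z (rfl | ⟨-, hz⟩) <;> omega
  · simp only [Finset.mem_sort, List.mem_append, List.mem_cons, Finset.mem_filter]
    rcases lt_trichotomy z e with h | rfl | h <;> grind

lemma length_EP (b a : Finset ℕ) : (EP b a).length = (b \ a).card + 1 := by
  rw [EP, length_epBlocks, Finset.length_sort]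

lemma EP_ne_nil (b a : Finset ℕ) : EP b a ≠ [] :=
  List.ne_nil_of_length_pos (by rw [length_EP]; omega)

lemma subset_of_mem_EP {b a blk : Finset ℕ} (h : blk ∈ EP b a) : blk ⊆ a :=
  subset_of_mem_epBlocks h

lemma listUnion_EP (b a : Finset ℕ) : listUnion (EP b a) = a :=
  listUnion_epBlocks fun _ hx hx' => (Finset.mem_sdiff.1 (Finset.mem_sort _ |>.1 hx')).2 hx

lemma pairwise_disjoint_EP (b a : Finset ℕ) : (EP b a).Pairwise Disjoint :=
  pairwise_disjoint_epBlocks _ _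

lemma EP_self (a : Finset ℕ) : EP a a = [a] := by
  simp [EP, epBlocks]

/-- `x \ t` and `y \ s` are the cut points of the two embedding partitions. -/
lemma EP_map_inter {x y t s : Finset ℕ} (hst : s ⊆ t) (hcut : x \ t = y \ s) :
    (EP x t).map (· ∩ s) = EP y s := by
  rw [EP, EP, hcut, epBlocks_map_inter, Finset.inter_eq_right.2 hst]

lemma EP_eq_append {b s : Finset ℕ} {e : ℕ} (he : e ∈ b \ s) :
    EP b s
      = EP (b.filter (· < e)) (s.filter (· < e))
        ++ EP (b.filter (e < ·)) (s.filter (e < ·)) := by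
  have hfilter (p : ℕ → Prop) [DecidablePred p] :
      (b \ s).filter p = b.filter p \ s.filter p := by
    ext; simp only [Finset.mem_filter, Finset.mem_sdiff]; tauto
  rw [EP, sort_eq_append_cons he, epBlocks_append_cons _ _ fun _ hx =>
    (Finset.mem_filter.1 ((Finset.mem_sort _).1 hx)).2, EP, EP, hfilter, hfilter]

lemma filter_lt_min'_sdiff {b t : Finset ℕ} (htb : t ⊆ b) (hne : (b \ t).Nonempty) :
    b.filter (· < (b \ t).min' hne) = t.filter (· < (b \ t).min' hne) := by
  ext z
  have := (b \ t).min'_le z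
  simp only [Finset.mem_filter, Finset.mem_sdiff] at this ⊢
  have := @htb z
  grind

lemma EP_eq_flatMap {b t s : Finset ℕ} (hst : s ⊆ t) (htb : t ⊆ b) :
    EP b s = (EP b t).flatMap fun blk => EP blk (s ∩ blk) := by
  induction h : (b \ t).card using Nat.strong_induction_on generalizing b t s with
  | _ n ih =>
    rcases (b \ t).eq_empty_or_nonempty with hbt | hne
    · obtain rfl : b = t := Finset.Subset.antisymm (Finset.sdiff_eq_empty_iff_subset.1 hbt) htb
      simp [EP_self, Finset.inter_eq_left.2 hst]
    set e := (b \ t).min' hne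
    have he : e ∈ b \ t := (b \ t).min'_mem hne
    have hcard : ((b.filter (e < ·)) \ (t.filter (e < ·))).card < n := by
      rw [← h]
      refine Finset.card_lt_card ⟨fun z hz => ?_, fun hsub => ?_⟩
      · simp only [Finset.mem_sdiff, Finset.mem_filter] at hz ⊢; tauto
      · simpa using hsub he
    have htail := ih _ hcard (s := s.filter (e < ·)) (Finset.filter_subset_filter _ hst)
      (Finset.filter_subset_filter _ htb) rfl
    rw [EP_eq_append (Finset.sdiff_subset_sdiff subset_rfl hst he), EP_eq_append he,
      filter_lt_min'_sdiff htb hne, EP_self, List.cons_append, List.nil_append,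
      List.flatMap_cons, htail]
    congr 1
    · congr 1; ext z; simp only [Finset.mem_filter, Finset.mem_inter]; have := @hst z; tauto
    · refine List.flatMap_congr fun blk hblk => congrArg _ ?_
      ext z
      have := @subset_of_mem_EP _ _ _ hblk z
      simp only [Finset.mem_inter, Finset.mem_filter] at this ⊢
      tauto

end EmbeddingPartition

section Prefixes

/- Indices are 0-based: `c.getD k (∅, ∅)` is the paper's `(A_{k+1}, B_{k+1})` (and `(∅, ∅)`
past the end), `numPrefix c k = B₁ ∪ ⋯ ∪ B_k` and `numSuffix c k = B_{k+1} ∪ ⋯ ∪ B_r`. -/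

def numPrefix (c : Bip) (k : ℕ) : Finset ℕ := listUnion ((c.take k).map Prod.snd)

def denPrefix (c : Bip) (k : ℕ) : Finset ℕ := listUnion ((c.take k).map Prod.fst)

def numSuffix (c : Bip) (k : ℕ) : Finset ℕ := listUnion ((c.drop k).map Prod.snd)

lemma getD_map_fst (c : Bip) (k : ℕ) : (c.map Prod.fst).getD k ∅ = (c.getD k (∅, ∅)).1 :=
  List.getD_map c (∅, ∅) Prod.fst

lemma getD_map_snd (c : Bip) (k : ℕ) : (c.map Prod.snd).getD k ∅ = (c.getD k (∅, ∅)).2 :=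
  List.getD_map c (∅, ∅) Prod.snd

lemma numPrefix_eq (c : Bip) (k : ℕ) : numPrefix c k = listUnion ((c.map Prod.snd).take k) := by
  rw [numPrefix, List.map_take]

lemma denPrefix_eq (c : Bip) (k : ℕ) : denPrefix c k = listUnion ((c.map Prod.fst).take k) := by
  rw [denPrefix, List.map_take]

lemma numSuffix_eq (c : Bip) (k : ℕ) : numSuffix c k = listUnion ((c.map Prod.snd).drop k) := by
  rw [numSuffix, List.map_drop]

lemma numPrefix_mono (c : Bip) {k m : ℕ} (h : k ≤ m) : numPrefix c k ⊆ numPrefix c m := by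
  rw [numPrefix_eq, numPrefix_eq, ← Nat.min_eq_left h, ← List.take_take]
  exact listUnion_take_subset _ _

lemma numPrefix_subset {b : Finset ℕ} {c : Bip} (hb : listUnion (c.map Prod.snd) = b) (k : ℕ) :
    numPrefix c k ⊆ b := by
  rw [numPrefix_eq, ← hb]
  exact listUnion_take_subset _ _

lemma sdiff_numPrefix {b : Finset ℕ} {c : Bip} (hpd : (c.map Prod.snd).Pairwise Disjoint)
    (hb : listUnion (c.map Prod.snd) = b) (k : ℕ) : b \ numPrefix c k = numSuffix c k := by
  rw [← hb, numPrefix_eq, numSuffix_eq, listUnion_sdiff_take hpd]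

lemma numSuffix_eq_union (c : Bip) (k : ℕ) :
    numSuffix c k = (c.getD k (∅, ∅)).2 ∪ numSuffix c (k + 1) := by
  rw [numSuffix_eq, numSuffix_eq, listUnion_drop_eq_union, getD_map_snd]

lemma num_subset_numSuffix (c : Bip) (k : ℕ) : (c.getD k (∅, ∅)).2 ⊆ numSuffix c k := by
  rw [numSuffix_eq_union]
  exact Finset.subset_union_left

lemma numSuffix_succ_subset (c : Bip) (k : ℕ) : numSuffix c (k + 1) ⊆ numSuffix c k := by
  rw [numSuffix_eq_union c k]
  exact Finset.subset_union_right

lemma disjoint_num_numSuffix {c : Bip} (hpd : (c.map Prod.snd).Pairwise Disjoint) (k : ℕ) :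
    Disjoint (c.getD k (∅, ∅)).2 (numSuffix c (k + 1)) := by
  rw [← getD_map_snd, numSuffix_eq]
  exact disjoint_getD_listUnion_drop hpd k

lemma numSuffix_sdiff_num {c : Bip} (hpd : (c.map Prod.snd).Pairwise Disjoint) (k : ℕ) :
    numSuffix c k \ (c.getD k (∅, ∅)).2 = numSuffix c (k + 1) := by
  rw [numSuffix_eq_union c k]
  exact Finset.union_sdiff_cancel_left (disjoint_num_numSuffix hpd k)

lemma denPrefix_succ (c : Bip) (k : ℕ) :
    denPrefix c (k + 1) = denPrefix c k ∪ (c.getD k (∅, ∅)).1 := by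
  rw [denPrefix_eq, denPrefix_eq, listUnion_take_succ, getD_map_fst]

lemma disjoint_denPrefix_den {c : Bip} (hpd : (c.map Prod.fst).Pairwise Disjoint) {k t : ℕ}
    (hkt : k ≤ t) : Disjoint (denPrefix c k) (c.getD t (∅, ∅)).1 := by
  rw [← getD_map_fst, denPrefix_eq]
  exact disjoint_listUnion_take_getD hpd hkt

lemma denPrefix_sdiff_union {c : Bip} (hpd : (c.map Prod.fst).Pairwise Disjoint) (k : ℕ) :
    denPrefix c (k + 2) \ ((c.getD k (∅, ∅)).1 ∪ (c.getD (k + 1) (∅, ∅)).1)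
      = denPrefix c (k + 1) \ (c.getD k (∅, ∅)).1 := by
  have h1 := Finset.disjoint_left.1 (disjoint_denPrefix_den hpd (le_refl k))
  have h2 := Finset.disjoint_left.1 (disjoint_denPrefix_den hpd k.le_succ)
  rw [denPrefix_succ c (k + 1), denPrefix_succ c k]
  ext x
  simp only [Finset.mem_sdiff, Finset.mem_union]
  have := @h1 x; have := @h2 x
  tauto

lemma numSuffix_sdiff_union {c : Bip} (hpd : (c.map Prod.snd).Pairwise Disjoint) (k : ℕ) :
    numSuffix c k \ ((c.getD k (∅, ∅)).2 ∪ (c.getD (k + 1) (∅, ∅)).2)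
      = numSuffix c (k + 1) \ (c.getD (k + 1) (∅, ∅)).2 := by
  rw [← numSuffix_sdiff_num hpd k, sdiff_sdiff_left]
  rfl

lemma num_subset_numPrefix (c : Bip) {t lam : ℕ} (ht : t < lam) :
    (c.getD t (∅, ∅)).2 ⊆ numPrefix c lam := by
  rw [← getD_map_snd, numPrefix_eq]
  exact getD_subset_listUnion_take _ ht

lemma den_subset_denPrefix (c : Bip) {t lam : ℕ} (ht : t < lam) :
    (c.getD t (∅, ∅)).1 ⊆ denPrefix c lam := by
  rw [← getD_map_fst, denPrefix_eq]
  exact getD_subset_listUnion_take _ ht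

end Prefixes

section Transverse

def columnEntry (c : Bip) (lam : ℕ) (bi : Finset ℕ) : Bip :=
  (c.take lam).map fun x => (x.1, x.2 ∩ bi)

lemma transColumn_eq (b : Finset ℕ) (c : Bip) (lam : ℕ) :
    transColumn b c lam = (EP b (numPrefix c lam)).map (columnEntry c lam) := rfl

def mergeColumn (Acol : List Bip) : Bip :=
  (List.range (Acol.headD []).length).map fun t =>
    (((Acol.headD []).getD t (∅, ∅)).1, listUnion (Acol.map fun e => (e.getD t (∅, ∅)).2))

def mergeRow (Brow : List Bip) : Bip :=
  (List.range (Brow.headD []).length).map fun t =>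
    (listUnion (Brow.map fun e => (e.getD t (∅, ∅)).1), ((Brow.headD []).getD t (∅, ∅)).2)

lemma tpProd_eq_append (Acol Brow : List Bip) :
    tpProd Acol Brow = mergeColumn Acol ++ mergeRow Brow := rfl

lemma length_tpProd (Acol Brow : List Bip) :
    (tpProd Acol Brow).length = (Acol.headD []).length + (Brow.headD []).length := by
  simp [tpProd]

lemma getD_map_of_map_default (c : Bip) (t : ℕ)
    (f : Finset ℕ × Finset ℕ → Finset ℕ × Finset ℕ)
    (hf : f (∅, ∅) = (∅, ∅)) : (c.map f).getD t (∅, ∅) = f (c.getD t (∅, ∅)) := by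
  rw [← List.getD_map c (∅, ∅) f, hf]

lemma getD_columnEntry (c : Bip) {t lam : ℕ} (ht : t < lam) (bi : Finset ℕ) :
    (columnEntry c lam bi).getD t (∅, ∅)
      = ((c.getD t (∅, ∅)).1, (c.getD t (∅, ∅)).2 ∩ bi) := by
  rw [columnEntry, getD_map_of_map_default _ _ _ (by simp), getD_take_of_lt _ _ ht]

lemma mergeColumn_transColumn (b : Finset ℕ) {c : Bip} {lam : ℕ} (hlam : lam ≤ c.length) :
    mergeColumn (transColumn b c lam) = c.take lam := by
  obtain ⟨blk, rest, hEP⟩ := List.exists_cons_of_ne_nil (EP_ne_nil b (numPrefix c lam))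
  have hhead : (transColumn b c lam).headD [] = columnEntry c lam blk := by
    rw [transColumn_eq, hEP]; rfl
  have hlen : (columnEntry c lam blk).length = lam := by simp [columnEntry, hlam]
  rw [mergeColumn, hhead, hlen, ← map_range_getD c (∅, ∅) hlam]
  refine List.map_congr_left fun t ht => ?_
  have ht : t < lam := List.mem_range.1 ht
  have hnum : (transColumn b c lam).map (fun e => (e.getD t (∅, ∅)).2)
      = (EP b (numPrefix c lam)).map ((c.getD t (∅, ∅)).2 ∩ ·) := by
    simp only [transColumn_eq, List.map_map]
    exact List.map_congr_left fun bi _ => congrArg Prod.snd (getD_columnEntry c ht bi)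
  rw [hnum, listUnion_map_inter_left, listUnion_EP, getD_columnEntry c ht,
    Finset.inter_eq_left.2 (num_subset_numPrefix c ht)]

lemma mergeRow_transRow (a : Finset ℕ) (c : Bip) (lam : ℕ) :
    mergeRow (transRow a c lam) = c.drop lam := by
  set A := listUnion ((c.drop lam).map Prod.fst)
  obtain ⟨blk, rest, hEP⟩ := List.exists_cons_of_ne_nil (EP_ne_nil a A)
  have hhead : (transRow a c lam).headD [] = (c.drop lam).map fun x => (x.1 ∩ blk, x.2) := by
    rw [transRow, hEP]; rfl
  have hentry (aj : Finset ℕ) (t : ℕ) :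
      (((c.drop lam).map fun x => (x.1 ∩ aj, x.2)).getD t (∅, ∅))
        = (((c.drop lam).getD t (∅, ∅)).1 ∩ aj, ((c.drop lam).getD t (∅, ∅)).2) :=
    getD_map_of_map_default _ _ _ (by simp)
  have hdrop :
      c.drop lam = (List.range (c.drop lam).length).map ((c.drop lam).getD · (∅, ∅)) := by
    rw [map_range_getD _ _ le_rfl, List.take_length]
  rw [mergeRow, hhead, List.length_map]
  conv_rhs => rw [hdrop]
  refine List.map_congr_left fun t ht => ?_
  have hden : (transRow a c lam).map (fun e => (e.getD t (∅, ∅)).1)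
      = (EP a A).map (((c.drop lam).getD t (∅, ∅)).1 ∩ ·) := by
    simp only [transRow, List.map_map]
    exact List.map_congr_left fun aj _ => congrArg Prod.fst (hentry aj t)
  have hsub : ((c.drop lam).getD t (∅, ∅)).1 ⊆ A :=
    subset_listUnion (List.mem_map.2 ⟨_, getD_mem_of_lt _ (List.mem_range.1 ht), rfl⟩)
  rw [hden, listUnion_map_inter_left, listUnion_EP, hentry, Finset.inter_eq_left.2 hsub]

lemma tpProd_transColumn_transRow (a b : Finset ℕ) {c : Bip} {lam : ℕ}
    (hlam : lam ≤ c.length) :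
    tpProd (transColumn b c lam) (transRow a c lam) = c := by
  rw [tpProd_eq_append, mergeColumn_transColumn b hlam, mergeRow_transRow, List.take_append_drop]

lemma length_headD_transColumn (b : Finset ℕ) {c : Bip} {lam : ℕ} (hlam : lam ≤ c.length) :
    ((transColumn b c lam).headD []).length = lam := by
  obtain ⟨blk, rest, hEP⟩ := List.exists_cons_of_ne_nil (EP_ne_nil b (numPrefix c lam))
  rw [transColumn_eq, hEP]
  simp [columnEntry, hlam]

lemma IsBipartition.bipOS_eq {a b : Finset ℕ} {c : Bip} (h : IsBipartition a b c) :
    bipOS c = b := h.2.2.2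

lemma IsBipartition.bipIS_eq {a b : Finset ℕ} {c : Bip} (h : IsBipartition a b c) :
    bipIS c = a := h.2.1.2

lemma IsTP.eq_of_tpProd_eq {Acol Brow : List Bip} (h : IsTP Acol Brow) {a b : Finset ℕ} {c : Bip}
    (hc : IsBipartition a b c) (hprod : tpProd Acol Brow = c) {lam : ℕ}
    (hlam : (Acol.headD []).length = lam) :
    Acol = transColumn b c lam ∧ Brow = transRow a c lam := by
  obtain ⟨a', b', c', lam', hbip, -, hlt, rfl, rfl⟩ := h
  rw [tpProd_transColumn_transRow a' b' hlt.le] at hprod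
  subst hprod
  rw [length_headD_transColumn b' hlt.le] at hlam
  subst hlam
  obtain rfl : b' = b := hbip.bipOS_eq.symm.trans hc.bipOS_eq
  obtain rfl : a' = a := hbip.bipIS_eq.symm.trans hc.bipIS_eq
  exact ⟨rfl, rfl⟩

end Transverse


section ElementaryMatrices

def elemMat (as bs : List (Finset ℕ)) : List (List Bip) :=
  bs.map fun bo => as.map fun ao => [(ao, bo)]

lemma elemFactor_eq (c : Bip) (k : ℕ) :
    elemFactor c k = elemMat (EP (denPrefix c (k + 1)) (c.getD k (∅, ∅)).1)
      (EP (numSuffix c k) (c.getD k (∅, ∅)).2) := rfl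

variable {as bs : List (Finset ℕ)}

lemma length_elemMat : (elemMat as bs).length = bs.length := by simp [elemMat]

lemma wid_elemMat (hbs : bs ≠ []) : wid (elemMat as bs) = as.length := by
  obtain ⟨bo, bs, rfl⟩ := List.exists_cons_of_ne_nil hbs
  simp [elemMat, wid]

lemma getD_elemMat {i : ℕ} (hi : i < bs.length) :
    (elemMat as bs).getD i [] = as.map fun ao => [(ao, bs.getD i ∅)] :=
  getD_map_of_lt _ _ _ ∅ hi

lemma entry_elemMat {i j : ℕ} (hi : i < bs.length) (hj : j < as.length) :
    entry (elemMat as bs) i j = [(as.getD j ∅, bs.getD i ∅)] := by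
  rw [entry, getD_elemMat hi, getD_map_of_lt _ _ _ ∅ hj]

lemma length_entry_elemMat {i j : ℕ} (hi : i < (elemMat as bs).length)
    (hj : j < wid (elemMat as bs)) : (entry (elemMat as bs) i j).length = 1 := by
  rw [length_elemMat] at hi
  rw [wid_elemMat (List.ne_nil_of_length_pos (by omega))] at hj
  rw [entry_elemMat hi hj, List.length_singleton]

lemma IsElemMat.length_entry {M : List (List Bip)} (hM : IsElemMat M) {i j : ℕ}
    (hi : i < M.length) (hj : j < wid M) : (entry M i j).length = 1 := by
  obtain ⟨as, bs, rfl⟩ := hM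
  exact length_entry_elemMat hi hj

lemma isAugPart_singleton (s : Finset ℕ) : IsAugPart s [s] := by
  simp [IsAugPart]

lemma isBipMat_elemMat (has : as ≠ []) (hbs : bs ≠ []) (hpa : as.Pairwise Disjoint)
    (hpb : bs.Pairwise Disjoint) : IsBipMat (elemMat as bs) := by
  have has' := List.length_pos_of_ne_nil has
  have hbs' := List.length_pos_of_ne_nil hbs
  have hw := wid_elemMat (as := as) hbs
  have hl : (elemMat as bs).length = bs.length := length_elemMat
  refine ⟨by simpa [elemMat] using hbs, ?_, ?_, ?_, ?_, ?_, ?_, ?_⟩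
  · obtain ⟨bo, bs, rfl⟩ := List.exists_cons_of_ne_nil hbs
    simpa [elemMat] using has
  · intro row hrow
    obtain ⟨bo, -, rfl⟩ := List.mem_map.1 hrow
    simp [hw]
  · intro row hrow e he
    obtain ⟨bo, -, rfl⟩ := List.mem_map.1 hrow
    obtain ⟨ao, -, rfl⟩ := List.mem_map.1 he
    exact List.cons_ne_nil _ _
  · intro i j hi hj
    rw [hl] at hi; rw [hw] at hj
    simpa [entry_elemMat hi hj, entry_elemMat hi has', bipOS] using isAugPart_singleton _
  · intro i j hi hj
    rw [hl] at hi; rw [hw] at hj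
    simpa [entry_elemMat hi hj, entry_elemMat hbs' hj, bipIS] using isAugPart_singleton _
  · intro j j' hj hj' hne
    rw [hw] at hj hj'
    simpa [entry_elemMat hbs' hj, entry_elemMat hbs' hj', bipIS] using
      disjoint_getD_of_pairwise hpa hne
  · intro i i' hi hi' hne
    rw [hl] at hi hi'
    simpa [entry_elemMat hi has', entry_elemMat hi' has', bipOS] using
      disjoint_getD_of_pairwise hpb hne

lemma elemFactor_isBipMat (c : Bip) (k : ℕ) : IsBipMat (elemFactor c k) :=
  isBipMat_elemMat (EP_ne_nil _ _) (EP_ne_nil _ _) (pairwise_disjoint_EP _ _)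
    (pairwise_disjoint_EP _ _)

lemma colBlock_elemMat (off h : ℕ) {j : ℕ} (hj : j < as.length) :
    colBlock (elemMat as bs) off h j
      = ((bs.drop off).take h).map fun bo => [(as.getD j ∅, bo)] := by
  rw [colBlock, elemMat, ← List.map_drop, ← List.map_take, List.map_map]
  exact List.map_congr_left fun bo _ => getD_map_of_lt _ _ _ ∅ hj

lemma rowBlock_elemMat {i : ℕ} (hi : i < bs.length) (off w : ℕ) :
    rowBlock (elemMat as bs) i off w
      = ((as.drop off).take w).map fun ao => [(ao, bs.getD i ∅)] := by
  rw [rowBlock, getD_elemMat hi, ← List.map_drop, ← List.map_take]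

end ElementaryMatrices

section BlockTransversePairs

lemma isBTP_of_blocks {A B : List (List Bip)} (qs ps : List ℕ) (hqB : qs.length = B.length)
    (hpA : ps.length = wid A) (hqA : qs.sum = A.length) (hpB : ps.sum = wid B)
    (hq : ∀ x ∈ qs, 1 ≤ x) (hp : ∀ x ∈ ps, 1 ≤ x)
    (htp : ∀ i j, i < B.length → j < wid A →
      IsTP (colBlock A (qs.take i).sum (qs.getD i 0) j)
        (rowBlock B i (ps.take j).sum (ps.getD j 0))) :
    IsBTP A B := by
  refine ⟨(List.range B.length).map fun i => (List.range (wid A)).map fun j =>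
      tpProd (colBlock A (qs.take i).sum (qs.getD i 0) j)
        (rowBlock B i (ps.take j).sum (ps.getD j 0)),
    qs, ps, hqB, hpA, hqA, hpB, hq, hp, by simp, ?_, fun i j hi hj => ⟨htp i j hi hj, ?_⟩⟩
  · intro row hrow
    obtain ⟨i, -, rfl⟩ := List.mem_map.1 hrow
    simp
  · rw [entry, getD_range_map _ _ hi, getD_range_map _ _ hj]

lemma isBipartition_pair {e d p q X Y : Finset ℕ} (hpq : Disjoint p q) (hXY : Disjoint X Y)
    (he : p ∪ q = e) (hd : X ∪ Y = d) : IsBipartition e d [(p, X), (q, Y)] :=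
  ⟨List.cons_ne_nil _ _, ⟨by simpa using hpq, by simpa using he⟩,
    ⟨by simpa using hXY, by simpa using hd⟩⟩

lemma transColumn_pair (d p X q Y : Finset ℕ) :
    transColumn d [(p, X), (q, Y)] 1 = (EP d X).map fun bo => [(p, bo)] := by
  simp only [transColumn, List.take_succ_cons, List.take_zero, List.map_cons, List.map_nil,
    listUnion_singleton]
  exact List.map_congr_left fun bo hbo => by
    rw [Finset.inter_eq_right.2 (subset_of_mem_EP hbo)]

lemma transRow_of_drop_eq {c : Bip} {lam : ℕ} {q Y : Finset ℕ} (h : c.drop lam = [(q, Y)])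
    (e : Finset ℕ) : transRow e c lam = (EP e q).map fun ao => [(ao, Y)] := by
  simp only [transRow, h, List.map_cons, List.map_nil, listUnion_singleton]
  exact List.map_congr_left fun ao hao => by
    rw [Finset.inter_eq_right.2 (subset_of_mem_EP hao)]

lemma isTP_elem_pair {AA AB BB BC e d : Finset ℕ} (hA : Disjoint AA AB) (hB : Disjoint BB BC)
    (he : e ⊆ AA ∪ AB) (hd : d ⊆ BB ∪ BC) :
    IsTP ((EP d (BB ∩ d)).map fun bo => [(e ∩ AA, bo)])
      ((EP e (AB ∩ e)).map fun ao => [(ao, d ∩ BC)]) := by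
  have hbip : IsBipartition e d [(e ∩ AA, BB ∩ d), (AB ∩ e, d ∩ BC)] := by
    refine isBipartition_pair (hA.mono Finset.inter_subset_right Finset.inter_subset_left)
      (hB.mono Finset.inter_subset_left Finset.inter_subset_right) ?_ ?_
    · rw [Finset.inter_comm AB, ← Finset.inter_union_distrib_left, Finset.inter_eq_left.2 he]
    · rw [Finset.inter_comm BB, ← Finset.inter_union_distrib_left, Finset.inter_eq_left.2 hd]
  exact ⟨e, d, _, 1, hbip, le_rfl, by simp,
    (transColumn_pair _ _ _ _ _).symm, (transRow_of_drop_eq rfl _).symm⟩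

/-- Block `(i, j)` is the transverse decomposition at `1` of the length-two bipartition
`(cols[j] ∩ AA | AB ∩ cols[j], BB ∩ rows[i] | rows[i] ∩ BC)` over the coarse cell. -/
lemma isBTP_elemMat {AA AB BB BC : Finset ℕ} (hA : Disjoint AA AB) (hB : Disjoint BB BC)
    {cols rows : List (Finset ℕ)} (hrows : rows ≠ [])
    (hcols_sub : ∀ e ∈ cols, e ⊆ AA ∪ AB) (hrows_sub : ∀ d ∈ rows, d ⊆ BB ∪ BC) :
    IsBTP (elemMat (cols.map (· ∩ AA)) (rows.flatMap fun d => EP d (BB ∩ d)))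
      (elemMat (cols.flatMap fun e => EP e (AB ∩ e)) (rows.map (· ∩ BC))) := by
  have hne : rows.flatMap (fun d => EP d (BB ∩ d)) ≠ [] := by
    obtain ⟨d, rows, rfl⟩ := List.exists_cons_of_ne_nil hrows
    simp [EP_ne_nil]
  refine isBTP_of_blocks (rows.map fun d => (EP d (BB ∩ d)).length)
    (cols.map fun e => (EP e (AB ∩ e)).length) (by simp [length_elemMat])
    (by rw [wid_elemMat hne]; simp) (by simp [length_elemMat, List.length_flatMap])
    (by rw [wid_elemMat (by simpa using hrows)]; simp [List.length_flatMap])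
    (by simp [length_EP]) (by simp [length_EP]) fun i j hi hj => ?_
  rw [length_elemMat, List.length_map] at hi
  rw [wid_elemMat hne, List.length_map] at hj
  rw [colBlock_elemMat _ _ (by simpa using hj), flatMap_drop_take_sum _ _ ∅ hi,
    rowBlock_elemMat (by simpa using hi), flatMap_drop_take_sum _ _ ∅ hj,
    getD_map_of_lt _ _ _ ∅ hj, getD_map_of_lt _ _ _ ∅ hi]
  exact isTP_elem_pair hA hB (hcols_sub _ (getD_mem_of_lt _ hj)) (hrows_sub _ (getD_mem_of_lt _ hi))

theorem elemFactor_isBTP {a b : Finset ℕ} {c : Bip} (hc : IsBipartition a b c) (k : ℕ) :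
    IsBTP (elemFactor c k) (elemFactor c (k + 1)) := by
  obtain ⟨-, ⟨hpdA, -⟩, ⟨hpdB, -⟩⟩ := hc
  set AA := (c.getD k (∅, ∅)).1
  set AB := (c.getD (k + 1) (∅, ∅)).1
  set BB := (c.getD k (∅, ∅)).2
  set BC := (c.getD (k + 1) (∅, ∅)).2
  have hA : Disjoint AA AB := by
    have := disjoint_getD_of_pairwise hpdA (Nat.succ_ne_self k).symm
    rwa [getD_map_fst, getD_map_fst] at this
  have hB : Disjoint BB BC := by
    have := disjoint_getD_of_pairwise hpdB (Nat.succ_ne_self k).symm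
    rwa [getD_map_snd, getD_map_snd] at this
  have hAsub : AA ∪ AB ⊆ denPrefix c (k + 2) :=
    Finset.union_subset (den_subset_denPrefix c (by omega)) (den_subset_denPrefix c (by omega))
  have hBsub : BB ∪ BC ⊆ numSuffix c k :=
    Finset.union_subset (num_subset_numSuffix c k)
      ((num_subset_numSuffix c (k + 1)).trans (numSuffix_succ_subset c k))
  rw [elemFactor_eq, elemFactor_eq,
    ← EP_map_inter Finset.subset_union_left (denPrefix_sdiff_union hpdA k),
    EP_eq_flatMap Finset.subset_union_left hBsub,
    EP_eq_flatMap Finset.subset_union_right hAsub,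
    ← EP_map_inter Finset.subset_union_right (numSuffix_sdiff_union hpdB k)]
  exact isBTP_elemMat hA hB (EP_ne_nil _ _) (fun _ => subset_of_mem_EP) (fun _ => subset_of_mem_EP)

end BlockTransversePairs

section PartialProducts

def columnMat (L : List Bip) : List (List Bip) := L.map fun e => [e]

lemma length_columnMat (L : List Bip) : (columnMat L).length = L.length := List.length_map _

lemma wid_columnMat {L : List Bip} (hL : L ≠ []) : wid (columnMat L) = 1 := by
  obtain ⟨e, L, rfl⟩ := List.exists_cons_of_ne_nil hL
  rfl

lemma entry_columnMat (L : List Bip) {i : ℕ} (hi : i < L.length) :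
    entry (columnMat L) i 0 = L.getD i [] := by
  rw [entry, columnMat, getD_map_of_lt _ _ _ [] hi]
  rfl

lemma colBlock_columnMat (L : List Bip) (off h : ℕ) :
    colBlock (columnMat L) off h 0 = (L.drop off).take h := by
  simp [colBlock, columnMat, ← List.map_drop, ← List.map_take, Function.comp_def]

lemma rowBlock_of_rect {B : List (List Bip)} (hrect : ∀ row ∈ B, row.length = wid B) {i : ℕ}
    (hi : i < B.length) : rowBlock B i 0 (wid B) = B.getD i [] := by
  rw [rowBlock, List.drop_zero]
  exact List.take_of_length_le (hrect _ (getD_mem_of_lt _ hi)).le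

lemma isBTPProd_columnMat {G B : List (List Bip)} {L : List Bip} (hG : ∀ g ∈ G, g ≠ [])
    (hGB : G.length = B.length) (hLB : L.length = B.length) (hw : 1 ≤ wid B)
    (hrect : ∀ row ∈ B, row.length = wid B)
    (htp : ∀ i < B.length, IsTP (G.getD i []) (B.getD i []) ∧
      L.getD i [] = tpProd (G.getD i []) (B.getD i [])) :
    IsBTPProd (columnMat G.flatten) B (columnMat L) := by
  have hB : 0 < B.length := List.length_pos_iff.2 fun h => by simp [h, wid] at hw
  have hflat : G.flatten ≠ [] := by
    obtain ⟨g, G', hG'⟩ := List.exists_cons_of_length_pos (hGB ▸ hB)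
    subst hG'
    exact fun h => hG g (by simp) (List.flatten_eq_nil_iff.1 h g (by simp))
  have hwA := wid_columnMat hflat
  refine ⟨G.map List.length, [wid B], by simp [hGB], by simp [hwA], by simp [length_columnMat],
    by simp, fun x hx => ?_, by simpa using hw, by simp [length_columnMat, hLB],
    fun row hrow => ?_, fun i j hi hj => ?_⟩
  · obtain ⟨g, hg, rfl⟩ := List.mem_map.1 hx
    exact List.length_pos_iff.2 (hG g hg)
  · obtain ⟨e, -, rfl⟩ := List.mem_map.1 hrow
    simp [hwA]
  · obtain rfl : j = 0 := by omega
    have hblock : colBlock (columnMat G.flatten) ((G.map List.length).take i).sum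
        ((G.map List.length).getD i 0) 0 = G.getD i [] := by
      rw [colBlock_columnMat, flatten_drop_take_sum _ (hGB ▸ hi)]
    have hrow : rowBlock B i (([wid B].take 0).sum) ([wid B].getD 0 0) = B.getD i [] :=
      rowBlock_of_rect hrect hi
    rw [hblock, hrow, entry_columnMat _ (hLB ▸ hi)]
    exact htp i hi

lemma transColumn_columnEntry (c : Bip) {k m : ℕ} (hkm : k ≤ m) (blk : Finset ℕ) :
    transColumn blk (columnEntry c m blk) k
      = (EP blk (numPrefix c k ∩ blk)).map (columnEntry c k) := by
  have htake : (columnEntry c m blk).take k = (c.take k).map fun x => (x.1, x.2 ∩ blk) := by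
    rw [columnEntry, ← List.map_take, List.take_take, Nat.min_eq_left hkm]
  have hnum : numPrefix (columnEntry c m blk) k = numPrefix c k ∩ blk := by
    rw [numPrefix, htake, List.map_map, numPrefix, ← listUnion_map_inter, List.map_map]
    rfl
  rw [transColumn_eq, hnum]
  refine List.map_congr_left fun bi hbi => ?_
  have hbi : bi ⊆ blk := (subset_of_mem_EP hbi).trans Finset.inter_subset_right
  rw [columnEntry, htake, List.map_map, columnEntry]
  exact List.map_congr_left fun x _ => by
    simp [Finset.inter_assoc, Finset.inter_eq_right.2 hbi]

lemma isBipartition_columnEntry {c : Bip} (hpdA : (c.map Prod.fst).Pairwise Disjoint)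
    (hpdB : (c.map Prod.snd).Pairwise Disjoint) {m : ℕ} (hm : 0 < m) (hmc : m ≤ c.length)
    {blk : Finset ℕ} (hblk : blk ⊆ numPrefix c m) :
    IsBipartition (denPrefix c m) blk (columnEntry c m blk) := by
  refine ⟨List.ne_nil_of_length_pos (by simp [columnEntry]; omega), ⟨?_, ?_⟩, ⟨?_, ?_⟩⟩
  · simpa [columnEntry, List.map_map, Function.comp_def, ← List.map_take] using
      hpdA.sublist (List.take_sublist m _)
  · simp [columnEntry, denPrefix, List.map_map, Function.comp_def]
  · have := (hpdB.sublist (List.take_sublist m _)).map (· ∩ blk)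
      fun {s t} hst => hst.mono Finset.inter_subset_left Finset.inter_subset_left
    simpa [columnEntry, List.map_map, Function.comp_def, ← List.map_take] using this
  · have := listUnion_map_inter ((c.take m).map Prod.snd) blk
    rw [← numPrefix, Finset.inter_eq_right.2 hblk, List.map_map] at this
    simpa [columnEntry, List.map_map, Function.comp_def, List.map_take] using this

end PartialProducts

section Factorization

lemma drop_columnEntry {c : Bip} {k : ℕ} (hk : k < c.length) (blk : Finset ℕ) :
    (columnEntry c (k + 1) blk).drop k
      = [((c.getD k (∅, ∅)).1, (c.getD k (∅, ∅)).2 ∩ blk)] := by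
  rw [columnEntry, ← List.map_drop, List.drop_take, Nat.add_sub_cancel_left,
    List.drop_eq_getElem_cons hk, List.getD_eq_getElem _ _ hk]
  rfl

lemma EP_numSuffix_eq_map_inter {b : Finset ℕ} {c : Bip}
    (hpd : (c.map Prod.snd).Pairwise Disjoint) (hb : listUnion (c.map Prod.snd) = b) (k : ℕ) :
    EP (numSuffix c k) (c.getD k (∅, ∅)).2
      = (EP b (numPrefix c (k + 1))).map (· ∩ (c.getD k (∅, ∅)).2) :=
  (EP_map_inter (num_subset_numPrefix c k.lt_succ_self)
    (by rw [sdiff_numPrefix hpd hb, numSuffix_sdiff_num hpd])).symm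

lemma length_elemFactor {b : Finset ℕ} {c : Bip} (hpd : (c.map Prod.snd).Pairwise Disjoint)
    (hb : listUnion (c.map Prod.snd) = b) (k : ℕ) :
    (elemFactor c k).length = (EP b (numPrefix c (k + 1))).length := by
  rw [elemFactor_eq, length_elemMat, EP_numSuffix_eq_map_inter hpd hb, List.length_map]

lemma getD_elemFactor {b : Finset ℕ} {c : Bip} (hpd : (c.map Prod.snd).Pairwise Disjoint)
    (hb : listUnion (c.map Prod.snd) = b) {k i : ℕ} (hk : k < c.length)
    (hi : i < (EP b (numPrefix c (k + 1))).length) :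
    (elemFactor c k).getD i []
      = transRow (denPrefix c (k + 1))
          (columnEntry c (k + 1) ((EP b (numPrefix c (k + 1))).getD i ∅)) k := by
  rw [transRow_of_drop_eq (drop_columnEntry hk _), elemFactor_eq,
    getD_elemMat (by rwa [EP_numSuffix_eq_map_inter hpd hb, List.length_map]),
    EP_numSuffix_eq_map_inter hpd hb, getD_map_of_lt _ _ _ ∅ hi, Finset.inter_comm]

lemma transColumn_eq_flatten {b : Finset ℕ} {c : Bip} (hb : listUnion (c.map Prod.snd) = b)
    (k : ℕ) : transColumn b c k = ((EP b (numPrefix c (k + 1))).map fun blk =>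
      transColumn blk (columnEntry c (k + 1) blk) k).flatten := by
  rw [transColumn_eq, EP_eq_flatMap (numPrefix_mono c k.le_succ) (numPrefix_subset hb _),
    List.map_flatMap, ← List.flatMap_def]
  exact List.flatMap_congr fun blk _ => (transColumn_columnEntry c k.le_succ blk).symm

theorem isBTPProd_transColumn {a b : Finset ℕ} {c : Bip} (hc : IsBipartition a b c) {k : ℕ}
    (hk0 : 0 < k) (hk : k < c.length) :
    IsBTPProd (columnMat (transColumn b c k)) (elemFactor c k)
      (columnMat (transColumn b c (k + 1))) := by
  obtain ⟨-, ⟨hpdA, -⟩, ⟨hpdB, hb⟩⟩ := hc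
  set coarse := EP b (numPrefix c (k + 1))
  have hlen := length_elemFactor hpdB hb k
  rw [transColumn_eq_flatten hb k]
  refine isBTPProd_columnMat (fun g hg => ?_) (by simp [hlen]) (by simp [transColumn_eq, hlen])
    (by rw [elemFactor_eq, wid_elemMat (EP_ne_nil _ _), length_EP]; omega)
    (elemFactor_isBipMat c k).rect fun i hi => ?_
  · obtain ⟨blk, -, rfl⟩ := List.mem_map.1 hg
    simpa [transColumn_eq] using EP_ne_nil _ _
  rw [hlen] at hi
  set blk := coarse.getD i ∅
  have hbip := isBipartition_columnEntry hpdA hpdB k.succ_pos hk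
    (subset_of_mem_EP (getD_mem_of_lt ∅ hi) : blk ⊆ _)
  have hlam : k < (columnEntry c (k + 1) blk).length := by simp [columnEntry]; omega
  rw [getD_map_of_lt _ _ _ ∅ hi, getD_elemFactor hpdB hb hk hi, transColumn_eq b c (k + 1),
    getD_map_of_lt _ _ _ ∅ hi, tpProd_transColumn_transRow _ _ hlam.le]
  exact ⟨⟨_, _, _, k, hbip, hk0, hlam, rfl, rfl⟩, rfl⟩

lemma eq_transColumn_of_isTP {a b : Finset ℕ} {c : Bip} (hc : IsBipartition a b c) {k i : ℕ}
    (hkc : k + 1 < c.length) (hi : i < (EP b (numPrefix c (k + 2))).length)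
    {Acol Brow : List Bip} (htp : IsTP Acol Brow)
    (hprod : tpProd Acol Brow = columnEntry c (k + 2) ((EP b (numPrefix c (k + 2))).getD i ∅))
    (hlen : (Acol.headD []).length = k + 1) :
    Acol = transColumn ((EP b (numPrefix c (k + 2))).getD i ∅)
        (columnEntry c (k + 2) ((EP b (numPrefix c (k + 2))).getD i ∅)) (k + 1) ∧
      Brow = (elemFactor c (k + 1)).getD i [] := by
  obtain ⟨-, ⟨hpdA, -⟩, ⟨hpdB, hb⟩⟩ := hc
  have hbip := isBipartition_columnEntry hpdA hpdB (by omega) (by omega)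
    (subset_of_mem_EP (getD_mem_of_lt ∅ hi))
  obtain ⟨hcol, hrow⟩ := htp.eq_of_tpProd_eq hbip hprod hlen
  exact ⟨hcol, hrow.trans (getD_elemFactor hpdB hb hkc hi).symm⟩

lemma transColumn_length {b : Finset ℕ} {c : Bip} (hb : listUnion (c.map Prod.snd) = b) :
    transColumn b c c.length = [c] := by
  have hnum : numPrefix c c.length = b := by rw [numPrefix, List.take_length, hb]
  have hentry : columnEntry c c.length b = c := by
    rw [columnEntry, List.take_length]
    conv_rhs => rw [← List.map_id c]
    refine List.map_congr_left fun x hx => ?_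
    rw [Finset.inter_eq_left.2 (hb ▸ subset_listUnion (List.mem_map_of_mem hx))]
    rfl
  rw [transColumn_eq, hnum, EP_self, List.map_singleton, hentry]

lemma columnMat_transColumn_one {b : Finset ℕ} {c : Bip} (hne : c ≠ [])
    (hb : listUnion (c.map Prod.snd) = b) : columnMat (transColumn b c 1) = elemFactor c 0 := by
  obtain ⟨x, xs, rfl⟩ := List.exists_cons_of_ne_nil hne
  have hsuffix : numSuffix (x :: xs) 0 = b := by rw [numSuffix, List.drop_zero, hb]
  have hprefix : numPrefix (x :: xs) 1 = x.2 := by simp [numPrefix]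
  simp only [elemFactor_eq, hsuffix, columnMat, transColumn_eq, elemMat, List.map_map, hprefix,
    List.getD_cons_zero]
  refine List.map_congr_left fun blk hblk => ?_
  simp [columnEntry, denPrefix, EP_self, Finset.inter_eq_right.2 (subset_of_mem_EP hblk)]

theorem isMatFactorization_elemFactor {a b : Finset ℕ} {c : Bip} (hc : IsBipartition a b c)
    (hr : 2 ≤ c.length) :
    IsMatFactorization ((List.range c.length).map (elemFactor c)) [[c]] := by
  have hb := hc.2.2.2
  refine ⟨by simpa using hr, fun F hF => ?_, fun k hk => ?_,
    (List.range c.length).map (fun k => columnMat (transColumn b c (k + 1))), by simp, ?_,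
    fun k hk => ?_, ?_⟩
  · obtain ⟨k, -, rfl⟩ := List.mem_map.1 hF
    exact elemFactor_isBipMat c k
  · rw [List.length_map, List.length_range] at hk
    rw [getD_range_map _ _ (by omega), getD_range_map _ _ hk]
    exact elemFactor_isBTP hc k
  · rw [getD_range_map _ _ (by omega), getD_range_map _ _ (by omega)]
    exact columnMat_transColumn_one hc.1 hb
  · rw [List.length_map, List.length_range] at hk
    rw [getD_range_map _ _ (by omega), getD_range_map _ _ hk, getD_range_map _ _ hk]
    exact isBTPProd_transColumn hc k.succ_pos hk
  · rw [List.length_map, List.length_range, getD_range_map _ _ (by omega),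
      Nat.sub_add_cancel (by omega), transColumn_length hb]
    rfl

end Factorization

section Uniqueness

lemma IsBTPProd.length_eq {A B C : List (List Bip)} (h : IsBTPProd A B C) :
    C.length = B.length := by
  obtain ⟨_, _, -, -, -, -, -, -, hlen, -, -⟩ := h
  exact hlen

lemma IsBTPProd.length_of_mem {A B C : List (List Bip)} (h : IsBTPProd A B C) :
    ∀ row ∈ C, row.length = wid A := by
  obtain ⟨_, _, -, -, -, -, -, -, -, hrows, -⟩ := h
  exact hrows

lemma IsBTPProd.wid_eq {A B C : List (List Bip)} (h : IsBTPProd A B C) (hC : C ≠ []) :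
    wid C = wid A := by
  obtain ⟨row, C, rfl⟩ := List.exists_cons_of_ne_nil hC
  exact h.length_of_mem row (by simp)

lemma flatten_blocks {α : Type*} (qs : List ℕ) : ∀ {L : List α}, qs.sum = L.length →
    ((List.range qs.length).map fun i => (L.drop (qs.take i).sum).take (qs.getD i 0)).flatten
      = L := by
  induction qs with
  | nil => intro L hL; simp [List.eq_nil_of_length_eq_zero hL.symm]
  | cons q qs ih =>
    intro L hL
    rw [List.length_cons, List.range_succ_eq_map, List.map_cons, List.map_map, List.flatten_cons]
    conv_rhs =>
      rw [← List.take_append_drop q L, ← ih (L := L.drop q) (by simp at hL ⊢; omega)]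
    simp [Function.comp_def, List.drop_drop]

lemma block_ne_nil {α : Type*} {L : List α} {qs : List ℕ} (hsum : qs.sum = L.length)
    (hq : ∀ x ∈ qs, 1 ≤ x) {i : ℕ} (hi : i < qs.length) :
    (L.drop (qs.take i).sum).take (qs.getD i 0) ≠ [] := by
  have hle := sum_take_add_getD_le qs hi
  have hpos := hq _ (getD_mem_of_lt 0 hi)
  rw [hsum] at hle
  exact List.ne_nil_of_length_pos (by rw [List.length_take, List.length_drop]; omega)

lemma IsBTPProd.columnMat_blocks {L : List Bip} {B C : List (List Bip)}
    (h : IsBTPProd (columnMat L) B C) (hL : L ≠ []) (hrect : ∀ row ∈ B, row.length = wid B) :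
    ∃ qs : List ℕ, qs.length = B.length ∧ qs.sum = L.length ∧ (∀ x ∈ qs, 1 ≤ x) ∧
      ∀ i < B.length, IsTP ((L.drop (qs.take i).sum).take (qs.getD i 0)) (B.getD i []) ∧
        entry C i 0 = tpProd ((L.drop (qs.take i).sum).take (qs.getD i 0)) (B.getD i []) := by
  obtain ⟨qs, ps, hqB, hpA, hqA, hpB, hq, -, -, -, hblocks⟩ := h
  rw [wid_columnMat hL] at hpA
  obtain ⟨w, rfl⟩ := List.length_eq_one_iff.1 hpA
  obtain rfl : w = wid B := by simpa using hpB
  refine ⟨qs, hqB, by rwa [length_columnMat] at hqA, hq, fun i hi => ?_⟩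
  have := hblocks i 0 hi (by rw [wid_columnMat hL]; omega)
  rwa [colBlock_columnMat, show ([wid B].take 0).sum = 0 from rfl,
    show [wid B].getD 0 0 = wid B from rfl, rowBlock_of_rect hrect hi] at this

def firstColumn (M : List (List Bip)) : List Bip := M.map (·.getD 0 [])

lemma columnMat_firstColumn {M : List (List Bip)} (h : ∀ row ∈ M, row.length = 1) :
    columnMat (firstColumn M) = M := by
  rw [columnMat, firstColumn, List.map_map]
  conv_rhs => rw [← List.map_id M]
  refine List.map_congr_left fun row hrow => ?_
  obtain ⟨e, rfl⟩ := List.length_eq_one_iff.1 (h row hrow)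
  rfl

lemma getD_firstColumn {M : List (List Bip)} {i : ℕ} (hi : i < M.length) :
    (firstColumn M).getD i [] = entry M i 0 :=
  getD_map_of_lt _ _ _ [] hi

lemma exists_entry_of_mem_firstColumn {M : List (List Bip)} {e : Bip} (he : e ∈ firstColumn M) :
    ∃ i < M.length, entry M i 0 = e := by
  obtain ⟨i, hi, rfl⟩ := List.getElem_of_mem he
  rw [firstColumn, List.length_map] at hi
  exact ⟨i, hi, by rw [← getD_firstColumn hi, List.getD_eq_getElem]⟩

lemma headD_eq_entry (M : List (List Bip)) (i : ℕ) : (M.getD i []).headD [] = entry M i 0 := by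
  rw [entry]
  cases M.getD i [] <;> rfl

/-- `D` is the chain of partial products of a factorization `Cs` of `c` into elementary
bipartition matrices. -/
structure IsElemChain (Cs D : List (List (List Bip))) (c : Bip) : Prop where
  two_le : 2 ≤ Cs.length
  isBipMat : ∀ F ∈ Cs, IsBipMat F
  isElemMat : ∀ F ∈ Cs, IsElemMat F
  head : D.getD 0 [] = Cs.getD 0 []
  step : ∀ k, k + 1 < Cs.length →
    IsBTPProd (D.getD k []) (Cs.getD (k + 1) []) (D.getD (k + 1) [])
  last : D.getD (Cs.length - 1) [] = [[c]]

namespace IsElemChain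

variable {Cs D : List (List (List Bip))} {c : Bip}

lemma isBipMat_getD (h : IsElemChain Cs D c) {k : ℕ} (hk : k < Cs.length) :
    IsBipMat (Cs.getD k []) :=
  h.isBipMat _ (getD_mem_of_lt _ hk)

lemma ne_nil (h : IsElemChain Cs D c) {k : ℕ} (hk : k < Cs.length) : D.getD k [] ≠ [] := by
  rcases k with _ | k
  · rw [h.head]; exact (h.isBipMat_getD hk).nrows
  · rw [← List.length_pos_iff, (h.step k hk).length_eq, List.length_pos_iff]
    exact (h.isBipMat_getD hk).nrows

lemma wid_eq_one (h : IsElemChain Cs D c) {k : ℕ} (hk : k < Cs.length) :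
    wid (D.getD k []) = 1 := by
  have hk' : k ≤ Cs.length - 1 := by omega
  induction hk' using Nat.decreasingInduction with
  | self => rw [h.last]; rfl
  | of_succ k hk ih =>
    rw [← ih (by omega), (h.step k (by omega)).wid_eq (h.ne_nil (by omega))]

lemma length_of_mem (h : IsElemChain Cs D c) {k : ℕ} (hk : k < Cs.length) :
    ∀ row ∈ D.getD k [], row.length = 1 := by
  intro row hrow
  rcases k with _ | k
  · rw [h.head] at hrow
    rw [(h.isBipMat_getD hk).rect row hrow, ← h.head, h.wid_eq_one hk]
  · rw [(h.step k hk).length_of_mem row hrow, h.wid_eq_one (by omega)]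

lemma eq_columnMat (h : IsElemChain Cs D c) {k : ℕ} (hk : k < Cs.length) :
    D.getD k [] = columnMat (firstColumn (D.getD k [])) :=
  (columnMat_firstColumn (h.length_of_mem hk)).symm

lemma firstColumn_ne_nil (h : IsElemChain Cs D c) {k : ℕ} (hk : k < Cs.length) :
    firstColumn (D.getD k []) ≠ [] := by
  simpa [firstColumn] using h.ne_nil hk

lemma step_blocks (h : IsElemChain Cs D c) {k : ℕ} (hk : k + 1 < Cs.length) :
    ∃ qs : List ℕ, qs.length = (Cs.getD (k + 1) []).length ∧
      qs.sum = (firstColumn (D.getD k [])).length ∧ (∀ x ∈ qs, 1 ≤ x) ∧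
      ∀ i < (Cs.getD (k + 1) []).length,
        IsTP (((firstColumn (D.getD k [])).drop (qs.take i).sum).take (qs.getD i 0))
          ((Cs.getD (k + 1) []).getD i []) ∧
        entry (D.getD (k + 1) []) i 0 =
          tpProd (((firstColumn (D.getD k [])).drop (qs.take i).sum).take (qs.getD i 0))
            ((Cs.getD (k + 1) []).getD i []) := by
  have hstep := h.step k hk
  rw [h.eq_columnMat (k := k) (by omega)] at hstep
  exact hstep.columnMat_blocks (h.firstColumn_ne_nil (by omega)) (h.isBipMat_getD hk).rect

lemma length_of_mem_firstColumn (h : IsElemChain Cs D c) {k : ℕ} (hk : k < Cs.length) :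
    ∀ e ∈ firstColumn (D.getD k []), e.length = k + 1 := by
  intro e he
  obtain ⟨i, hi, rfl⟩ := exists_entry_of_mem_firstColumn he
  clear he
  induction k generalizing i with
  | zero =>
    rw [h.head] at hi ⊢
    exact (h.isElemMat _ (getD_mem_of_lt _ hk)).length_entry hi
      (List.length_pos_iff.2 (h.isBipMat_getD hk).ncols)
  | succ k ih =>
    obtain ⟨qs, hqC, hqL, hq, hblocks⟩ := h.step_blocks hk
    have hiC : i < (Cs.getD (k + 1) []).length := by rwa [← (h.step k hk).length_eq]
    obtain ⟨x, xs, hx⟩ := List.exists_cons_of_ne_nil (block_ne_nil hqL hq (hqC ▸ hiC))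
    have hxmem : x ∈ firstColumn (D.getD k []) :=
      List.mem_of_mem_drop (List.mem_of_mem_take (hx ▸ List.mem_cons_self))
    obtain ⟨j, hj, rfl⟩ := exists_entry_of_mem_firstColumn hxmem
    rw [(hblocks i hiC).2, length_tpProd, hx, List.headD_cons, ih (by omega) j hj,
      headD_eq_entry, (h.isElemMat _ (getD_mem_of_lt _ hk)).length_entry hiC
        (List.length_pos_iff.2 (h.isBipMat_getD hk).ncols)]

lemma length_eq (h : IsElemChain Cs D c) : Cs.length = c.length := by
  have := h.two_le
  have := h.length_of_mem_firstColumn (k := Cs.length - 1) (by omega) c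
    (by rw [h.last]; simp [firstColumn])
  omega

variable {a b : Finset ℕ}

/-- Each entry of `D_{k+1}` is the product of a transverse pair cut at `k + 1`, and such a pair
is determined by its product; so `D_{k+1}` determines `D_k` and `C_{k+1}`. -/
lemma firstColumn_eq_transColumn_of_succ (h : IsElemChain Cs D c) (hc : IsBipartition a b c)
    {k : ℕ} (hk : k + 1 < Cs.length)
    (hnext : firstColumn (D.getD (k + 1) []) = transColumn b c (k + 2)) :
    firstColumn (D.getD k []) = transColumn b c (k + 1) ∧
      Cs.getD (k + 1) [] = elemFactor c (k + 1) := by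
  obtain ⟨-, -, ⟨hpdB, hb⟩⟩ := id hc
  have hkc : k + 1 < c.length := h.length_eq ▸ hk
  set coarse := EP b (numPrefix c (k + 2))
  obtain ⟨qs, hqC, hqL, hq, hblocks⟩ := h.step_blocks hk
  have hlenD : (D.getD (k + 1) []).length = coarse.length := by
    rw [← List.length_map (f := (·.getD 0 [])), ← firstColumn, hnext, transColumn_eq,
      List.length_map]
  have hlenC : (Cs.getD (k + 1) []).length = coarse.length := by
    rw [← (h.step k hk).length_eq, hlenD]
  have key : ∀ i < coarse.length,
      ((firstColumn (D.getD k [])).drop (qs.take i).sum).take (qs.getD i 0)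
        = transColumn (coarse.getD i ∅) (columnEntry c (k + 2) (coarse.getD i ∅)) (k + 1) ∧
      (Cs.getD (k + 1) []).getD i [] = (elemFactor c (k + 1)).getD i [] := by
    intro i hi
    have hiC : i < (Cs.getD (k + 1) []).length := hlenC ▸ hi
    obtain ⟨x, xs, hx⟩ := List.exists_cons_of_ne_nil (block_ne_nil hqL hq (hqC ▸ hiC))
    have hprod := (hblocks i hiC).2
    rw [← getD_firstColumn (hlenD ▸ hi), hnext, transColumn_eq, getD_map_of_lt _ _ _ ∅ hi]
      at hprod
    refine eq_transColumn_of_isTP hc hkc hi (hblocks i hiC).1 hprod.symm ?_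
    rw [hx]
    exact h.length_of_mem_firstColumn (by omega) x
      (List.mem_of_mem_drop (List.mem_of_mem_take (hx ▸ List.mem_cons_self)))
  constructor
  · rw [← flatten_blocks qs hqL, transColumn_eq_flatten hb, hqC, hlenC]
    congr 1
    refine List.ext_getElem (by simp [coarse]) fun i h1 h2 => ?_
    rw [List.getElem_map, List.getElem_map, List.getElem_range, ← List.getD_eq_getElem coarse ∅]
    exact (key i (by simpa using h1)).1
  · refine List.ext_getElem (by rw [hlenC, length_elemFactor hpdB hb]) fun i h1 h2 => ?_
    rw [← List.getD_eq_getElem _ [] h1, ← List.getD_eq_getElem _ [] h2]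
    exact (key i (hlenC ▸ h1)).2

lemma firstColumn_eq_transColumn (h : IsElemChain Cs D c) (hc : IsBipartition a b c) {k : ℕ}
    (hk : k < Cs.length) : firstColumn (D.getD k []) = transColumn b c (k + 1) := by
  have hk' : k ≤ Cs.length - 1 := by omega
  induction hk' using Nat.decreasingInduction with
  | self =>
    have := h.two_le
    rw [h.last, Nat.sub_add_cancel (by omega), h.length_eq, transColumn_length hc.2.2.2]
    rfl
  | of_succ k hk ih => exact (h.firstColumn_eq_transColumn_of_succ hc (by omega) (ih (by omega))).1

lemma getD_eq_elemFactor (h : IsElemChain Cs D c) (hc : IsBipartition a b c) {k : ℕ}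
    (hk : k < Cs.length) : Cs.getD k [] = elemFactor c k := by
  rcases k with _ | k
  · rw [← h.head, h.eq_columnMat hk, h.firstColumn_eq_transColumn hc hk,
      columnMat_transColumn_one hc.1 hc.2.2.2]
  · exact (h.firstColumn_eq_transColumn_of_succ hc hk (h.firstColumn_eq_transColumn hc hk)).2

lemma eq_map_elemFactor (h : IsElemChain Cs D c) (hc : IsBipartition a b c) :
    Cs = (List.range c.length).map (elemFactor c) := by
  refine List.ext_getElem (by simp [h.length_eq]) fun k h1 h2 => ?_
  rw [← List.getD_eq_getElem _ [] h1, h.getD_eq_elemFactor hc h1, List.getElem_map,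
    List.getElem_range]

end IsElemChain

end Uniqueness

/-- Let `c` be a bipartition on `(a, b)` of length `r > 1`, and let
`C_k` be its `k`-th elementary factor as above.  Then `c = C₁ C₂ ⋯ C_r` is a
factorization of `c` (viewed as a `1×1` matrix): each consecutive pair is a Block
Transverse Pair and the iterated product equals `c`; each `C_k` is an elementary
matrix; and this is the unique factorization of `c` into elementary bipartition
matrices. -/
theorem statement7 (a b : Finset ℕ) (c : Bip)
    (hc : IsBipartition a b c) (hr : 2 ≤ c.length) :
    IsMatFactorization ((List.range c.length).map (elemFactor c)) [[c]] ∧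
    (∀ F ∈ (List.range c.length).map (elemFactor c), IsElemMat F) ∧
    (∀ Cs : List (List (List Bip)), IsMatFactorization Cs [[c]] →
      (∀ F ∈ Cs, IsElemMat F) → Cs = (List.range c.length).map (elemFactor c)) := by
  refine ⟨isMatFactorization_elemFactor hc hr, fun F hF => ?_, fun Cs hCs helem => ?_⟩
  · obtain ⟨k, -, rfl⟩ := List.mem_map.1 hF
    exact ⟨_, _, rfl⟩
  · obtain ⟨htwo, hmat, -, D, -, hhead, hstep, hlast⟩ := hCs
    exact IsElemChain.eq_map_elemFactor ⟨htwo, hmat, helem, hhead, hstep, hlast⟩ hc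

end BipM
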